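/- Let B be a Baer subplane of PG(2,q²) secant to ℓ∞, let α be a plane of PG(4,q) not contained in Σ∞ whose affine points are exactly the φ-images of the affine points of B, and let P̄, Q̄ ∈ ℓ∞ be conjugate with respect to B. Then in PG(4,q²), the lines PQ^q and P^qQ each meet the extended plane α⋆, where P, Q are the points of the transversal g corresponding to P̄, Q̄. -/

import Mathlib

open scoped Classical
open Matrix

noncomputable section

namespace BaerConics

/-- Points of the projective space `PG(n-1, K)` as projectivization of `Fin n → K`. -/
abbrev PP (K : Type) [Field K] (n : ℕ) : Type := Projectivization K (Fin n → K)

variable {K : Type} [Field K] {m n : ℕ}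

/-- The (at most one) projective point determined by a vector:  empty if `v = 0`,
and the singleton `{[v]}` otherwise. -/
def projPt (v : Fin n → K) : Set (PP K n) :=
  {p | ∃ h : v ≠ 0, p = Projectivization.mk K v h}

/-- The set of projective points lying in a linear subspace. -/
def ptsOf (W : Submodule K (Fin n → K)) : Set (PP K n) :=
  {p | p.rep ∈ W}

/-- The projective line through two points (as the set of points of the span). -/
def lineTh (P Q : PP K n) : Set (PP K n) :=
  ptsOf (Submodule.span K {P.rep, Q.rep})

/-- `X` is a projective flat of projective dimension `d`. -/
def IsFlat (d : ℕ) (X : Set (PP K n)) : Prop :=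
  ∃ W : Submodule K (Fin n → K), Module.finrank K W = d + 1 ∧ X = ptsOf W

/-- Image of a set of vectors under the projective map induced by a matrix. -/
def mimg (M : Matrix (Fin m) (Fin n) K) (X : Set (Fin n → K)) : Set (PP K m) :=
  {p | ∃ v ∈ X, p ∈ projPt (M.mulVec v)}

/-- Coordinatewise application of a ring homomorphism to a vector. -/
def mapVec {L : Type} [Field L] (σ : K →+* L) (v : Fin n → K) : Fin n → L :=
  fun i => σ (v i)

lemma mulVec_inj (M : Matrix (Fin n) (Fin n) K) (hM : IsUnit M.det) :
    Function.Injective M.mulVec := by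
  intro a b hab
  have h := congrArg (fun v => M⁻¹.mulVec v) hab
  simpa [Matrix.mulVec_mulVec, Matrix.nonsing_inv_mul M hM] using h

/-- The projective transformation induced by an invertible matrix. -/
def pmap (M : Matrix (Fin n) (Fin n) K) (hM : IsUnit M.det) (p : PP K n) : PP K n :=
  Projectivization.mk K (M.mulVec p.rep) (by
    intro h
    apply p.rep_nonzero
    have h0 : M.mulVec p.rep = M.mulVec 0 := by simpa [Matrix.mulVec_zero] using h
    exact mulVec_inj M hM h0)

/-- The map induced on projective points by the coordinatewise `q`-power map. -/
def frobPt (q : ℕ) (p : PP K n) : PP K n :=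
  Projectivization.mk K (fun i => p.rep i ^ q) (by
    obtain ⟨i, hi⟩ := Function.ne_iff.mp p.rep_nonzero
    intro h
    exact pow_ne_zero q (by simpa using hi) (by simpa using congrFun h i))

/-- The line at infinity `z = 0` of `PG(2, K)`. -/
def linf (K : Type) [Field K] : Set (PP K 3) := {p | p.rep 2 = 0}

/-- Coordinatewise application of the algebra map to a vector. -/
def algVec (F : Type) {K : Type} [Field F] [Field K] [Algebra F K] {n : ℕ}
    (v : Fin n → F) : Fin n → K := fun i => algebraMap F K (v i)

/-- Vectors representing the points of the standard Baer subline of `ℓ∞`. -/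
def sublineVecs (F K : Type) [Field F] [Field K] [Algebra F K] : Set (Fin 3 → K) :=
  {v | ∃ θ : F, v = ![algebraMap F K θ, 1, 0]} ∪ {![1, 0, 0]}

/-- Nonzero vectors representing the points of `ℓ∞`. -/
def linfVecs (K : Type) [Field K] : Set (Fin 3 → K) := {v | v ≠ 0 ∧ v 2 = 0}

/-- Vectors with all coordinates in (the image of) `F`, representing the canonical
Baer subplane. -/
def subplaneVecs (F K : Type) [Field F] [Field K] [Algebra F K] : Set (Fin 3 → K) :=
  {v | ∃ w : Fin 3 → F, w ≠ 0 ∧ v = algVec F w}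

/-- Vectors of the standard conic with parameters in `S`. -/
def conicVecs {K : Type} [Field K] (S : Set K) : Set (Fin 3 → K) :=
  {v | ∃ θ ∈ S, v = ![1, θ, θ ^ 2]} ∪ {![0, 0, 1]}

/-- `b` is a Baer subline of the line `ℓ` of `PG(2,q²)`. -/
def IsBaerSublineOf (F : Type) {K : Type} [Field F] [Field K] [Algebra F K]
    (b ℓ : Set (PP K 3)) : Prop :=
  ∃ M : Matrix (Fin 3) (Fin 3) K, IsUnit M.det ∧
    ℓ = mimg M (linfVecs K) ∧ b = mimg M (sublineVecs F K)

/-- `B` is a Baer subplane of `PG(2,q²)`. -/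
def IsBaerSubplane (F : Type) {K : Type} [Field F] [Field K] [Algebra F K]
    (B : Set (PP K 3)) : Prop :=
  ∃ M : Matrix (Fin 3) (Fin 3) K, IsUnit M.det ∧ B = mimg M (subplaneVecs F K)

/-- `C` is the image under `PGL(3,K)` of the standard conic with parameters in `S`. -/
def IsConicOver {K : Type} [Field K] (S : Set K) (C : Set (PP K 3)) : Prop :=
  ∃ M : Matrix (Fin 3) (Fin 3) K, IsUnit M.det ∧ C = mimg M (conicVecs S)

/-- An `F_q`-conic of `PG(2,q²)`: a nondegenerate conic of a Baer subplane. -/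
def IsFqConic (F : Type) {K : Type} [Field F] [Field K] [Algebra F K]
    (C : Set (PP K 3)) : Prop :=
  IsConicOver (Set.range (algebraMap F K)) C

/-- An `F_{q²}`-conic of `PG(2,q²)`: a nondegenerate conic. -/
def IsFq2Conic {K : Type} [Field K] (C : Set (PP K 3)) : Prop :=
  IsConicOver (Set.univ : Set K) C

/-- `𝒦` is an `ℓ∞`-Baer pencil with vertex `P`. -/
def IsLinfBaerPencil (F : Type) {K : Type} [Field F] [Field K] [Algebra F K]
    (𝒦 : Set (PP K 3)) (P : PP K 3) : Prop :=
  P ∈ linf K ∧ ∃ ℓ b : Set (PP K 3), IsBaerSublineOf F b ℓ ∧ P ∉ ℓ ∧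
    (∃! X, X ∈ b ∩ linf K) ∧ 𝒦 = ⋃ X ∈ b, lineTh P X

/-- `m` is a line of the Baer subplane `B`, with extension (full line) `ℓ`. -/
def IsLineOfExt {K : Type} [Field K] (q : ℕ) (B m ℓ : Set (PP K 3)) : Prop :=
  IsFlat 1 ℓ ∧ m = B ∩ ℓ ∧ m.ncard = q + 1

/-- `m` is a line of the Baer subplane `B`. -/
def IsLineOf {K : Type} [Field K] (q : ℕ) (B m : Set (PP K 3)) : Prop :=
  ∃ ℓ, IsLineOfExt q B m ℓ

/-- `P` and `Q` are conjugate with respect to the Baer subline `b` of `ℓ∞`. -/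
def ConjWrtSubline (F : Type) {K : Type} [Field F] [Field K] [Algebra F K]
    (q : ℕ) (b : Set (PP K 3)) (P Q : PP K 3) : Prop :=
  ∃ (M : Matrix (Fin 3) (Fin 3) K) (hM : IsUnit M.det),
    mimg M (linfVecs K) = linf K ∧ b = mimg M (sublineVecs F K) ∧
    ∃ P₀ : PP K 3, P = pmap M hM P₀ ∧ Q = pmap M hM (frobPt q P₀)

/-- A representative vector for the point `(δ,1,0)` (resp. `(1,0,0)`) of `ℓ∞`. -/
def ptInfVec {K : Type} [Field K] : Option K → Fin 3 → K
  | some δ => ![δ, 1, 0]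
  | none => ![1, 0, 0]

lemma ptInfVec_ne {K : Type} [Field K] (t : Option K) : ptInfVec t ≠ 0 := by
  cases t with
  | none => intro h; have h0 := congrFun h 0; simp [ptInfVec] at h0
  | some δ => intro h; have h0 := congrFun h 1; simp [ptInfVec] at h0

/-- The point of `ℓ∞` with parameter `δ ∈ K ∪ {∞}`. -/
def ptInf {K : Type} [Field K] (t : Option K) : PP K 3 :=
  Projectivization.mk K (ptInfVec t) (ptInfVec_ne t)

/-- The hyperplane at infinity `z = 0` of `PG(4, F)`. -/
def sinf (F : Type) [Field F] : Set (PP F 5) := {p | p.rep 4 = 0}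

/-- Affine coordinates of the Bruck-Bose image of an affine point of `PG(2,q²)`. -/
def bbVec {F K : Type} [Field F] [Field K] (c0 c1 : K → F) (p : PP K 3) : Fin 5 → F :=
  ![c0 (p.rep 0 / p.rep 2), c1 (p.rep 0 / p.rep 2),
    c0 (p.rep 1 / p.rep 2), c1 (p.rep 1 / p.rep 2), 1]

/-- The Bruck-Bose map (meaningful on affine points of `PG(2,q²)`). -/
def bb {F K : Type} [Field F] [Field K] (c0 c1 : K → F) (p : PP K 3) : PP F 5 :=
  Projectivization.mk F (bbVec c0 c1 p) (by
    intro h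
    have h4 := congrFun h 4
    simp [bbVec] at h4)

/-- First spanning vector of the spread line with parameter `δ ∈ K ∪ {∞}`. -/
def spreadV1 {F K : Type} [Field F] [Field K] (c0 c1 : K → F) : Option K → Fin 5 → F
  | some δ => ![c0 δ, c1 δ, 1, 0, 0]
  | none => ![1, 0, 0, 0, 0]

/-- Second spanning vector of the spread line with parameter `δ ∈ K ∪ {∞}`. -/
def spreadV2 {F K : Type} [Field F] [Field K] (c0 c1 : K → F) (t0 t1 : F) :
    Option K → Fin 5 → F
  | some δ => ![t0 * c1 δ, c0 δ + t1 * c1 δ, 0, 1, 0]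
  | none => ![0, 1, 0, 0, 0]

/-- The line of the regular spread `S` with parameter `δ ∈ K ∪ {∞}`. -/
def spreadLine {F K : Type} [Field F] [Field K] (c0 c1 : K → F) (t0 t1 : F)
    (t : Option K) : Set (PP F 5) :=
  ptsOf (Submodule.span F {spreadV1 c0 c1 t, spreadV2 c0 c1 t0 t1 t})

/-- The extension `[T]⋆` of a spread line to `PG(4,q²)`. -/
def extSpreadLine (F : Type) {K : Type} [Field F] [Field K] [Algebra F K]
    (c0 c1 : K → F) (t0 t1 : F) (t : Option K) : Set (PP K 5) :=
  ptsOf (Submodule.span K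
    {algVec F (spreadV1 c0 c1 t), algVec F (spreadV2 c0 c1 t0 t1 t)})

/-- The `K`-extension of an `F`-subspace. -/
def extSub (F : Type) {K : Type} [Field F] [Field K] [Algebra F K] {n : ℕ}
    (W : Submodule F (Fin n → F)) : Submodule K (Fin n → K) :=
  Submodule.span K (algVec F '' (W : Set (Fin n → F)))

def A0v {K : Type} [Field K] (τ : K) (q : ℕ) : Fin 5 → K := ![τ ^ q, -1, 0, 0, 0]
def A1v {K : Type} [Field K] (τ : K) (q : ℕ) : Fin 5 → K := ![0, 0, τ ^ q, -1, 0]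
def B0v {K : Type} [Field K] (τ : K) : Fin 5 → K := ![τ, -1, 0, 0, 0]
def B1v {K : Type} [Field K] (τ : K) : Fin 5 → K := ![0, 0, τ, -1, 0]

/-- The transversal line `g` of the regular spread, in `PG(4,q²)`. -/
def gline {K : Type} [Field K] (τ : K) (q : ℕ) : Set (PP K 5) :=
  ptsOf (Submodule.span K {A0v τ q, A1v τ q})

/-- The conjugate transversal line `g^q` of the regular spread, in `PG(4,q²)`. -/
def gqline {K : Type} [Field K] (τ : K) : Set (PP K 5) :=
  ptsOf (Submodule.span K {B0v τ, B1v τ})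

/-- Representative vector of the point `T = δA₀ + A₁` of `g`. -/
def gptVec {K : Type} [Field K] (τ : K) (q : ℕ) : Option K → Fin 5 → K
  | some δ => δ • A0v τ q + A1v τ q
  | none => A0v τ q

/-- Representative vector of the conjugate point `T^q = δ^q A₀^q + A₁^q` of `g^q`. -/
def gqptVec {K : Type} [Field K] (τ : K) (q : ℕ) : Option K → Fin 5 → K
  | some δ => δ ^ q • B0v τ + B1v τ
  | none => B0v τ

lemma gptVec_ne {K : Type} [Field K] (τ : K) (q : ℕ) (t : Option K) :
    gptVec τ q t ≠ 0 := by
  cases t with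
  | none =>
      intro h
      have := congrFun h 1
      simp [gptVec, A0v] at this
  | some δ =>
      intro h
      have := congrFun h 3
      simp [gptVec, A0v, A1v] at this

lemma gqptVec_ne {K : Type} [Field K] (τ : K) (q : ℕ) (t : Option K) :
    gqptVec τ q t ≠ 0 := by
  cases t with
  | none =>
      intro h
      have := congrFun h 1
      simp [gqptVec, B0v] at this
  | some δ =>
      intro h
      have := congrFun h 3
      simp [gqptVec, B0v, B1v] at this

/-- The point of `g` corresponding to the point of `ℓ∞` with parameter `δ ∈ K ∪ {∞}`. -/
def gpt {K : Type} [Field K] (τ : K) (q : ℕ) (t : Option K) : PP K 5 :=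
  Projectivization.mk K (gptVec τ q t) (gptVec_ne τ q t)

/-- The point of `g^q` conjugate to `gpt τ q t`. -/
def gqpt {K : Type} [Field K] (τ : K) (q : ℕ) (t : Option K) : PP K 5 :=
  Projectivization.mk K (gqptVec τ q t) (gqptVec_ne τ q t)

/-- Evaluation of the quadratic form with matrix `M` at `v`. -/
def qeval {K : Type} [Field K] {n : ℕ} (M : Matrix (Fin n) (Fin n) K) (v : Fin n → K) : K :=
  v ⬝ᵥ M.mulVec v

/-- Vectors of the standard twisted cubic (inside the hyperplane `x₄ = 0`)
with parameters in `S`. -/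
def tcVecs {K : Type} [Field K] (S : Set K) : Set (Fin 5 → K) :=
  {v | ∃ θ ∈ S, v = ![1, θ, θ ^ 2, θ ^ 3, 0]} ∪ {![0, 0, 0, 1, 0]}

/-- Vectors of the standard 4-dimensional normal rational curve with parameters in `S`. -/
def nrcVecs {K : Type} [Field K] (S : Set K) : Set (Fin 5 → K) :=
  {v | ∃ θ ∈ S, v = ![1, θ, θ ^ 2, θ ^ 3, θ ^ 4]} ∪ {![0, 0, 0, 0, 1]}

/-- `R` is a regulus of `Σ∞` in `PG(4,q)`. -/
def IsRegulus {F : Type} [Field F] (q : ℕ) (R : Set (Set (PP F 5))) : Prop :=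
  R.ncard = q + 1 ∧
  (∀ ℓ ∈ R, IsFlat 1 ℓ ∧ ℓ ⊆ sinf F) ∧
  (∀ ℓ ∈ R, ∀ ℓ' ∈ R, ℓ ≠ ℓ' → ℓ ∩ ℓ' = ∅) ∧
  (∀ mℓ : Set (PP F 5), IsFlat 1 mℓ → mℓ ⊆ sinf F →
    (∃ ℓ₁ ∈ R, ∃ ℓ₂ ∈ R, ∃ ℓ₃ ∈ R, ℓ₁ ≠ ℓ₂ ∧ ℓ₁ ≠ ℓ₃ ∧ ℓ₂ ≠ ℓ₃ ∧
      (mℓ ∩ ℓ₁).Nonempty ∧ (mℓ ∩ ℓ₂).Nonempty ∧ (mℓ ∩ ℓ₃).Nonempty) →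
    ∀ ℓ ∈ R, (mℓ ∩ ℓ).Nonempty)


/-!
`Σ∞⋆ = g ⊕ g^q`, and the two components of a vector `ζ` of `Σ∞⋆` are read off from
`(ζ₀ + ζ₁τ, ζ₂ + ζ₃τ)` and `(ζ₀ + ζ₁τ^q, ζ₂ + ζ₃τ^q)`: the direction of `PG(4,q)` coming from the
vector `(x, y)` of `K²` has components `(x, y)` and `(x^q, y^q)`. Differences of affine points of
`B` show that `α` contains the directions of the points of `B ∩ ℓ∞`, and these directions are
`F`-linear in a representative matrix `k M` of the subline. Writing `P̄ = M P₀`, `Q̄ = M P₀^q`, the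
`K`-combination of the directions of the columns of `k M` with coefficients `P₀` lies in `α⋆`
and has components `P` and `Q^q`. Exchanging `P₀` and `P₀^q` gives the line `P^qQ`.
-/

lemma pow_card_pow_card {F K : Type} [Fintype F] [Field K] [Fintype K]
    (hK : Fintype.card K = Fintype.card F ^ 2) (x : K) :
    (x ^ Fintype.card F) ^ Fintype.card F = x := by
  rw [← pow_mul, ← sq, ← hK, FiniteField.pow_card]

/-- The `q`-power map generates `Gal(K/F)`, so its fixed points are the elements of `F`. -/
lemma pow_card_ne_self {F K : Type} [Field F] [Field K] [Algebra F K] [Fintype F] [Finite K]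
    {x : K} (hx : x ∉ Set.range (algebraMap F K)) : x ^ Fintype.card F ≠ x := by
  refine fun hfix => hx ((IsGalois.mem_range_algebraMap_iff_fixed x).mpr fun f => ?_)
  obtain ⟨n, rfl⟩ := (FiniteField.bijective_frobeniusAlgEquivOfAlgebraic_pow F K).2 f
  rw [AlgEquiv.coe_pow]
  exact Function.iterate_fixed hfix n

section Projective

variable {K : Type} [Field K] {n : ℕ}

lemma mk_mem_ptsOf_iff {W : Submodule K (Fin n → K)} {v : Fin n → K} (hv : v ≠ 0) :
    Projectivization.mk K v hv ∈ ptsOf W ↔ v ∈ W := by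
  change (Projectivization.mk K v hv).rep ∈ W ↔ v ∈ W
  rw [← Submodule.span_singleton_le_iff_mem,
    ← Projectivization.submodule_eq, Projectivization.submodule_mk,
    Submodule.span_singleton_le_iff_mem]

lemma lineTh_mk {u v : Fin n → K} (hu : u ≠ 0) (hv : v ≠ 0) :
    lineTh (Projectivization.mk K u hu) (Projectivization.mk K v hv)
      = ptsOf (Submodule.span K {u, v}) := by
  rw [lineTh, Submodule.span_insert, Submodule.span_insert, ← Projectivization.submodule_eq,
    ← Projectivization.submodule_eq, Projectivization.submodule_mk,
    Projectivization.submodule_mk]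

lemma lineTh_comm (P Q : PP K n) : lineTh P Q = lineTh Q P := by
  rw [lineTh, lineTh, Set.pair_comm]

lemma mk_rep_eq_zero_iff {v : Fin n → K} (hv : v ≠ 0) (i : Fin n) :
    (Projectivization.mk K v hv).rep i = 0 ↔ v i = 0 := by
  obtain ⟨a, ha⟩ := Projectivization.exists_smul_eq_mk_rep K v hv
  rw [← ha, Units.smul_def, Pi.smul_apply, smul_eq_mul, mul_eq_zero, or_iff_right a.ne_zero]

lemma mk_rep_div_mk_rep {v : Fin n → K} (hv : v ≠ 0) (i j : Fin n) :
    (Projectivization.mk K v hv).rep i / (Projectivization.mk K v hv).rep j = v i / v j := by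
  obtain ⟨a, ha⟩ := Projectivization.exists_smul_eq_mk_rep K v hv
  rw [← ha, Units.smul_def, Pi.smul_apply, Pi.smul_apply, smul_eq_mul, smul_eq_mul,
    mul_div_mul_left _ _ a.ne_zero]

lemma mem_linf_mk {v : Fin 3 → K} (hv : v ≠ 0) :
    Projectivization.mk K v hv ∈ linf K ↔ v 2 = 0 :=
  mk_rep_eq_zero_iff hv 2

end Projective

section Matrix

variable {K : Type} [Field K] {M : Matrix (Fin 3) (Fin 3) K}

lemma mulVec_ne_zero (hM : IsUnit M.det) {v : Fin 3 → K} (hv : v ≠ 0) : M *ᵥ v ≠ 0 :=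
  fun h => hv (mulVec_inj M hM (by rw [h, Matrix.mulVec_zero]))

lemma mulVec_eq_of_apply_two_eq_zero {v : Fin 3 → K} (hv2 : v 2 = 0) :
    M *ᵥ v = v 0 • M *ᵥ ![1, 0, 0] + v 1 • M *ᵥ ![0, 1, 0] := by
  rw [← Matrix.mulVec_smul, ← Matrix.mulVec_smul, ← Matrix.mulVec_add]
  congr 1
  funext i
  fin_cases i <;> simp [hv2]

end Matrix

section BruckBose

variable {F K : Type} [Field F] [Field K] [Algebra F K]

lemma eq_zero_of_algebraMap_add_mul_eq_zero {τ : K} (hτF : τ ∉ Set.range (algebraMap F K))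
    {a b : F} (h : algebraMap F K a + algebraMap F K b * τ = 0) : a = 0 ∧ b = 0 := by
  obtain rfl | hb := eq_or_ne b 0
  · simpa using h
  · refine absurd ⟨-a / b, ?_⟩ hτF
    rw [map_div₀, map_neg, div_eq_iff ((algebraMap F K).injective.ne hb |>.trans_eq (map_zero _))]
    linear_combination -h

lemma coords_add {τ : K} (hτF : τ ∉ Set.range (algebraMap F K)) {c0 c1 : K → F}
    (hc : ∀ x : K, x = algebraMap F K (c0 x) + algebraMap F K (c1 x) * τ) (x y : K) :
    c0 (x + y) = c0 x + c0 y ∧ c1 (x + y) = c1 x + c1 y := by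
  have h := eq_zero_of_algebraMap_add_mul_eq_zero hτF
    (a := c0 (x + y) - c0 x - c0 y) (b := c1 (x + y) - c1 x - c1 y) (by
      simp only [map_sub]
      linear_combination hc x + hc y - hc (x + y))
  exact ⟨by linear_combination h.1, by linear_combination h.2⟩

/-- Bruck–Bose coordinates of the point at infinity of `PG(4,q)` in the direction `(x, y)`. -/
def dirVec (c0 c1 : K → F) (x y : K) : Fin 5 → F := ![c0 x, c1 x, c0 y, c1 y, 0]

lemma bbVec_mk_add_sub_bbVec_mk {τ : K} (hτF : τ ∉ Set.range (algebraMap F K)) {c0 c1 : K → F}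
    (hc : ∀ x : K, x = algebraMap F K (c0 x) + algebraMap F K (c1 x) * τ)
    {u v : Fin 3 → K} (hu2 : u 2 = 0) (huv : u + v ≠ 0) (hv : v ≠ 0) :
    bbVec c0 c1 (Projectivization.mk K (u + v) huv) - bbVec c0 c1 (Projectivization.mk K v hv)
      = dirVec c0 c1 (u 0 / v 2) (u 1 / v 2) := by
  simp only [bbVec, mk_rep_div_mk_rep, Pi.add_apply, hu2, zero_add, add_div,
    (coords_add hτF hc _ _).1, (coords_add hτF hc _ _).2]
  funext i
  fin_cases i <;> simp [dirVec]

/-- On `Σ∞⋆`, `tauCoords τ` vanishes on `g^q` and `tauCoords τ^q` vanishes on `g`. -/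
def tauCoords (s : K) : (Fin 5 → K) →ₗ[K] Fin 2 → K where
  toFun ζ := ![ζ 0 + ζ 1 * s, ζ 2 + ζ 3 * s]
  map_add' ζ ζ' := by
    funext i
    fin_cases i <;> simp <;> ring
  map_smul' a ζ := by
    funext i
    fin_cases i <;> simp <;> ring

lemma tauCoords_apply (s : K) (ζ : Fin 5 → K) :
    tauCoords s ζ = ![ζ 0 + ζ 1 * s, ζ 2 + ζ 3 * s] := rfl

lemma tauCoords_algVec_dirVec {τ : K} {c0 c1 : K → F}
    (hc : ∀ x : K, x = algebraMap F K (c0 x) + algebraMap F K (c1 x) * τ)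
    (σ : K →ₐ[F] K) (x y : K) :
    tauCoords (σ τ) (algVec F (dirVec c0 c1 x y)) = ![σ x, σ y] := by
  have hσ : ∀ z : K, σ z = algebraMap F K (c0 z) + algebraMap F K (c1 z) * σ τ := fun z => by
    conv_lhs => rw [hc z]
    simp
  rw [tauCoords_apply, hσ x, hσ y]
  rfl

lemma eq_of_tauCoords_eq {s s' : K} (hs : s ≠ s') {ζ ζ' : Fin 5 → K} (h4 : ζ 4 = ζ' 4)
    (h : tauCoords s ζ = tauCoords s ζ') (h' : tauCoords s' ζ = tauCoords s' ζ') : ζ = ζ' := by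
  have hs' : s - s' ≠ 0 := sub_ne_zero.mpr hs
  have key : ∀ i j : Fin 5, ζ i + ζ j * s = ζ' i + ζ' j * s →
      ζ i + ζ j * s' = ζ' i + ζ' j * s' → ζ i = ζ' i ∧ ζ j = ζ' j := fun i j e e' => by
    have hj : ζ j = ζ' j :=
      sub_eq_zero.mp ((mul_eq_zero.mp (by linear_combination e - e')).resolve_right hs')
    exact ⟨by linear_combination e - s * hj, hj⟩
  have h01 := key 0 1 (congrFun h 0) (congrFun h' 0)
  have h23 := key 2 3 (congrFun h 1) (congrFun h' 1)
  funext i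
  fin_cases i
  exacts [h01.1, h01.2, h23.1, h23.2, h4]

end BruckBose

section Transversal

variable {K : Type} [Field K] (τ : K)

lemma tauCoords_gptVec (q : ℕ) (t : Option K) :
    tauCoords τ (gptVec τ q t) = (τ ^ q - τ) • ![ptInfVec t 0, ptInfVec t 1] := by
  funext i
  cases t <;> fin_cases i <;> simp [tauCoords_apply, gptVec, A0v, A1v, ptInfVec] <;> ring

lemma tauCoords_pow_gptVec (q : ℕ) (t : Option K) : tauCoords (τ ^ q) (gptVec τ q t) = 0 := by
  funext i
  cases t <;> fin_cases i <;> simp [tauCoords_apply, gptVec, A0v, A1v]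

lemma tauCoords_gqptVec (q : ℕ) (t : Option K) : tauCoords τ (gqptVec τ q t) = 0 := by
  funext i
  cases t <;> fin_cases i <;> simp [tauCoords_apply, gqptVec, B0v, B1v]

lemma tauCoords_pow_gqptVec {q : ℕ} (hq : q ≠ 0) (t : Option K) :
    tauCoords (τ ^ q) (gqptVec τ q t) = (τ - τ ^ q) • ![ptInfVec t 0 ^ q, ptInfVec t 1 ^ q] := by
  funext i
  cases t <;> fin_cases i <;> simp [tauCoords_apply, gqptVec, B0v, B1v, ptInfVec, hq] <;> ring

lemma ptInfVec_pair_ne_zero (t : Option K) : ![ptInfVec t 0, ptInfVec t 1] ≠ 0 := by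
  cases t <;> simp [ptInfVec, funext_iff, Fin.forall_fin_two]

end Transversal

lemma lineTh_gpt_gqpt_inter_nonempty {K : Type} [Field K] {τ : K} {q : ℕ} (hτ : τ ^ q ≠ τ)
    (hq : q ≠ 0) {tP tQ : Option K} {W : Submodule K (Fin 5 → K)} {ζ : Fin 5 → K} (hζ : ζ ∈ W)
    (h4 : ζ 4 = 0) {a b : K} (ha : a ≠ 0)
    (hP : tauCoords τ ζ = a • ![ptInfVec tP 0, ptInfVec tP 1])
    (hQ : tauCoords (τ ^ q) ζ = b • ![ptInfVec tQ 0 ^ q, ptInfVec tQ 1 ^ q]) :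
    (lineTh (gpt τ q tP) (gqpt τ q tQ) ∩ ptsOf W).Nonempty := by
  have hζ0 : ζ ≠ 0 := by
    rintro rfl
    exact smul_ne_zero ha (ptInfVec_pair_ne_zero tP) (by simpa using hP.symm)
  have hτ' : τ ^ q - τ ≠ 0 := sub_ne_zero.mpr hτ
  have hτ'' : τ - τ ^ q ≠ 0 := sub_ne_zero.mpr hτ.symm
  have hcomb : ζ = (a / (τ ^ q - τ)) • gptVec τ q tP + (b / (τ - τ ^ q)) • gqptVec τ q tQ := by
    refine eq_of_tauCoords_eq hτ.symm ?_ ?_ ?_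
    · cases tP <;> cases tQ <;> simp [h4, gptVec, gqptVec, A0v, A1v, B0v, B1v]
    · rw [map_add, map_smul, map_smul, tauCoords_gptVec, tauCoords_gqptVec, hP, smul_smul,
        div_mul_cancel₀ _ hτ', smul_zero, add_zero]
    · rw [map_add, map_smul, map_smul, tauCoords_pow_gptVec, tauCoords_pow_gqptVec τ hq, hQ,
        smul_smul, div_mul_cancel₀ _ hτ'', smul_zero, zero_add]
  refine ⟨Projectivization.mk K ζ hζ0, ?_, (mk_mem_ptsOf_iff hζ0).mpr hζ⟩
  rw [gpt, gqpt, lineTh_mk, mk_mem_ptsOf_iff, hcomb]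
  exact Submodule.add_mem _ (Submodule.smul_mem _ _ (Submodule.subset_span (by simp)))
    (Submodule.smul_mem _ _ (Submodule.subset_span (by simp)))

lemma bbVec_mem_of_mem {F K : Type} [Field F] [Field K] {B : Set (PP K 3)}
    {W : Submodule F (Fin 5 → F)} {c0 c1 : K → F}
    (halpha : bb c0 c1 '' (B \ linf K) = ptsOf W \ sinf F) {p : PP K 3} (hpB : p ∈ B)
    (hp : p ∉ linf K) : bbVec c0 c1 p ∈ W := by
  have h : bb c0 c1 p ∈ ptsOf W \ sinf F := halpha ▸ Set.mem_image_of_mem _ ⟨hpB, hp⟩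
  exact (mk_mem_ptsOf_iff _).mp h.1

section BaerSubplane

variable (F : Type) {K : Type} [Field F] [Field K] [Algebra F K]

def baerSubmodule (Mb : Matrix (Fin 3) (Fin 3) K) : Submodule F (Fin 3 → K) :=
  LinearMap.range ((Mb.mulVecLin.restrictScalars F) ∘ₗ (Algebra.linearMap F K).compLeft (Fin 3))

variable {F} {Mb : Matrix (Fin 3) (Fin 3) K}

lemma mem_baerSubmodule {v : Fin 3 → K} :
    v ∈ baerSubmodule F Mb ↔ ∃ w : Fin 3 → F, Mb *ᵥ algVec F w = v := Iff.rfl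

lemma mk_mem_of_mem_baerSubmodule {v : Fin 3 → K} (hv : v ∈ baerSubmodule F Mb) (hv0 : v ≠ 0) :
    Projectivization.mk K v hv0 ∈ mimg Mb (subplaneVecs F K) := by
  obtain ⟨w, rfl⟩ := mem_baerSubmodule.mp hv
  refine ⟨algVec F w, ⟨w, ?_, rfl⟩, hv0, rfl⟩
  rintro rfl
  exact hv0 (by rw [show algVec F (0 : Fin 3 → F) = 0 from funext fun _ => map_zero _,
    Matrix.mulVec_zero])

lemma exists_smul_mem_baerSubmodule_of_mk_mem {v : Fin 3 → K} (hv0 : v ≠ 0)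
    (hv : Projectivization.mk K v hv0 ∈ mimg Mb (subplaneVecs F K)) :
    ∃ a : K, a ≠ 0 ∧ a • v ∈ baerSubmodule F Mb := by
  obtain ⟨_, ⟨w, -, rfl⟩, hw0, hvw⟩ := hv
  obtain ⟨a, ha⟩ := (Projectivization.mk_eq_mk_iff K v _ hv0 hw0).mp hvw
  exact ⟨(a⁻¹ : Kˣ), Units.ne_zero _, mem_baerSubmodule.mpr ⟨w, by
    rw [← ha, Units.smul_def, smul_smul, Units.inv_mul, one_smul]⟩⟩

lemma exists_mem_baerSubmodule_apply_two_ne_zero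
    (h : (mimg Mb (subplaneVecs F K) \ linf K).Nonempty) :
    ∃ v ∈ baerSubmodule F Mb, v 2 ≠ 0 := by
  obtain ⟨_, ⟨_, ⟨w, -, rfl⟩, hw0, rfl⟩, hinf⟩ := h
  exact ⟨Mb *ᵥ algVec F w, mem_baerSubmodule.mpr ⟨w, rfl⟩,
    fun h2 => hinf ((mem_linf_mk hw0).mpr h2)⟩

/-- An affine point `v` and a point at infinity `u` of `B` give the affine points `v` and `u + v`
of `B`, whose Bruck–Bose images differ by the direction `u / v₂`. -/
lemma dirVec_mem_of_mem_baerSubmodule {τ : K} (hτF : τ ∉ Set.range (algebraMap F K))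
    {c0 c1 : K → F} (hc : ∀ x : K, x = algebraMap F K (c0 x) + algebraMap F K (c1 x) * τ)
    {W : Submodule F (Fin 5 → F)}
    (halpha : bb c0 c1 '' (mimg Mb (subplaneVecs F K) \ linf K) = ptsOf W \ sinf F)
    {u v : Fin 3 → K} (hu : u ∈ baerSubmodule F Mb) (hu2 : u 2 = 0)
    (hv : v ∈ baerSubmodule F Mb) (hv2 : v 2 ≠ 0) :
    dirVec c0 c1 (u 0 / v 2) (u 1 / v 2) ∈ W := by
  have hv0 : v ≠ 0 := fun h => hv2 (by simp [h])
  have huv2 : (u + v) 2 ≠ 0 := by simpa [hu2] using hv2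
  have huv0 : u + v ≠ 0 := fun h => huv2 (by rw [h]; rfl)
  have mem : ∀ {x : Fin 3 → K} (hx : x ∈ baerSubmodule F Mb) (hx2 : x 2 ≠ 0) (hx0 : x ≠ 0),
      bbVec c0 c1 (Projectivization.mk K x hx0) ∈ W := fun hx hx2 hx0 =>
    bbVec_mem_of_mem halpha (mk_mem_of_mem_baerSubmodule hx hx0)
      (fun h => hx2 ((mem_linf_mk hx0).mp h))
  rw [← bbVec_mk_add_sub_bbVec_mk hτF hc hu2 huv0 hv0]
  exact W.sub_mem (mem (Submodule.add_mem _ hu hv) huv2 huv0) (mem hv hv2 hv0)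

end BaerSubplane

section Subline

variable {F K : Type} [Field F] [Field K] [Algebra F K] {M Mb : Matrix (Fin 3) (Fin 3) K}

lemma mulVec_apply_two_eq_zero_and_exists_smul_mem_baerSubmodule (hM : IsUnit M.det)
    (hb : mimg Mb (subplaneVecs F K) ∩ linf K = mimg M (sublineVecs F K)) {sv : Fin 3 → K}
    (hsv : sv ∈ sublineVecs F K) (hsv0 : sv ≠ 0) :
    (M *ᵥ sv) 2 = 0 ∧ ∃ a : K, a ≠ 0 ∧ a • M *ᵥ sv ∈ baerSubmodule F Mb := by
  have h0 := mulVec_ne_zero hM hsv0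
  have hmem : Projectivization.mk K (M *ᵥ sv) h0 ∈ mimg Mb (subplaneVecs F K) ∩ linf K :=
    hb ▸ ⟨sv, hsv, h0, rfl⟩
  exact ⟨(mem_linf_mk h0).mp hmem.2, exists_smul_mem_baerSubmodule_of_mk_mem h0 hmem.1⟩

/-- The `F`-structures that `M` and `Mb` induce on the Baer subline agree up to one scalar `k`:
compare the representatives in `baerSubmodule` of `M e₀`, `M e₁` and of their sum. -/
lemma exists_smul_mulVec_mem_baerSubmodule (hM : IsUnit M.det)
    (hb : mimg Mb (subplaneVecs F K) ∩ linf K = mimg M (sublineVecs F K)) :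
    ∃ k : K, k ≠ 0 ∧ k • (M *ᵥ ![1, 0, 0]) ∈ baerSubmodule F Mb ∧
      k • (M *ᵥ ![0, 1, 0]) ∈ baerSubmodule F Mb := by
  obtain ⟨he0, a0, ha0, hs0⟩ :=
    mulVec_apply_two_eq_zero_and_exists_smul_mem_baerSubmodule hM hb (Or.inr rfl)
      (by simp [funext_iff, Fin.forall_fin_succ])
  obtain ⟨he1, a1, ha1, hs1⟩ := mulVec_apply_two_eq_zero_and_exists_smul_mem_baerSubmodule hM hb
    (sv := ![0, 1, 0]) (Or.inl ⟨0, by simp⟩) (by simp [funext_iff, Fin.forall_fin_succ])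
  have hsum : a0 • (M *ᵥ ![1, 0, 0]) + a1 • (M *ᵥ ![0, 1, 0]) = M *ᵥ ![a0, a1, 0] :=
    (mulVec_eq_of_apply_two_eq_zero (v := ![a0, a1, 0]) rfl).symm
  have hs0' : M *ᵥ ![a0, a1, 0] ≠ 0 := mulVec_ne_zero hM
    fun h => ha0 (by simpa using congrFun h 0)
  have hs2 : (M *ᵥ ![a0, a1, 0]) 2 = 0 := by
    rw [← hsum]
    simp [he0, he1]
  have hsB : Projectivization.mk K _ hs0' ∈ mimg M (sublineVecs F K) :=
    hb ▸ ⟨mk_mem_of_mem_baerSubmodule (hsum ▸ Submodule.add_mem _ hs0 hs1) hs0',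
      (mem_linf_mk hs0').mpr hs2⟩
  obtain ⟨sv, hsv, hsv0, hsveq⟩ := hsB
  obtain ⟨c, hc⟩ := (Projectivization.mk_eq_mk_iff K _ _ hs0' hsv0).mp hsveq
  have hcsv : (c : K) • sv = ![a0, a1, 0] :=
    mulVec_inj M hM (by rw [Matrix.mulVec_smul, ← Units.smul_def, hc])
  rcases hsv with ⟨θ, rfl⟩ | rfl
  · have hθ : (c : K) * algebraMap F K θ = a0 := by simpa using congrFun hcsv 0
    have hc1 : (c : K) = a1 := by simpa using congrFun hcsv 1
    have hθK : algebraMap F K θ ≠ 0 := by intro h; exact ha0 (by rw [← hθ, h, mul_zero])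
    refine ⟨a1, ha1, ?_, hs1⟩
    convert (baerSubmodule F Mb).smul_mem θ⁻¹ hs0 using 1
    rw [← hθ, ← hc1, ← algebraMap_smul K θ⁻¹, smul_smul, map_inv₀, mul_comm (c : K),
      inv_mul_cancel_left₀ hθK]
  · exact absurd (by simpa using (congrFun hcsv 1).symm) ha1

end Subline

section Conjugate

variable {K : Type} [Field K] {M : Matrix (Fin 3) (Fin 3) K}

lemma pmap_mk (hM : IsUnit M.det) {v : Fin 3 → K} (hv : v ≠ 0) :
    pmap M hM (Projectivization.mk K v hv)
      = Projectivization.mk K (M *ᵥ v) (mulVec_ne_zero hM hv) := by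
  obtain ⟨a, ha⟩ := Projectivization.exists_smul_eq_mk_rep K v hv
  refine (Projectivization.mk_eq_mk_iff K _ _ _ _).mpr ⟨a, ?_⟩
  rw [← ha, Units.smul_def, Matrix.mulVec_smul, Units.smul_def]

lemma mulVec_apply_two_eq_zero (hM : IsUnit M.det) (hMlinf : mimg M (linfVecs K) = linf K)
    {v : Fin 3 → K} (hv : v ≠ 0) (hv2 : v 2 = 0) : (M *ᵥ v) 2 = 0 :=
  (mem_linf_mk (mulVec_ne_zero hM hv)).mp (hMlinf ▸ ⟨v, ⟨hv, hv2⟩, _, rfl⟩)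

lemma rep_two_eq_zero_of_pmap_mem_linf (hM : IsUnit M.det)
    (hMlinf : mimg M (linfVecs K) = linf K) {p : PP K 3} (hp : pmap M hM p ∈ linf K) :
    p.rep 2 = 0 := by
  rw [← hMlinf] at hp
  obtain ⟨v, ⟨-, hv2⟩, hv0, hpv⟩ := hp
  obtain ⟨a, ha⟩ := (Projectivization.mk_eq_mk_iff K _ _ _ hv0).mp hpv
  have hav : a • v = p.rep := mulVec_inj M hM (by rw [Units.smul_def, Matrix.mulVec_smul,
    ← Units.smul_def, ha])
  rw [← hav, Units.smul_def, Pi.smul_apply, hv2, smul_zero]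

lemma exists_smul_eq_ptInfVec {t : Option K} {v : Fin 3 → K} {hv : v ≠ 0}
    (h : ptInf t = Projectivization.mk K v hv) : ∃ a : K, a ≠ 0 ∧ a • v = ptInfVec t := by
  obtain ⟨a, ha⟩ := (Projectivization.mk_eq_mk_iff K _ _ _ _).mp h
  exact ⟨a, a.ne_zero, ha⟩

lemma ptInf_mem_linf (t : Option K) : ptInf t ∈ linf K :=
  (mem_linf_mk _).mpr (by cases t <;> rfl)

/-- Coordinates of `P̄ = M P₀` and `Q̄ = M P₀^q` with respect to the columns of `k M`. -/
lemma exists_coords_of_conj {q : ℕ} (hq : q ≠ 0) (hM : IsUnit M.det)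
    (hMlinf : mimg M (linfVecs K) = linf K) {k : K} (hk : k ≠ 0) {tP tQ : Option K}
    {p : PP K 3} (hP : ptInf tP = pmap M hM p) (hQ : ptInf tQ = pmap M hM (frobPt q p)) :
    ∃ x0 x1 a b : K, a ≠ 0 ∧ b ≠ 0 ∧
      a • (x0 • k • M *ᵥ ![1, 0, 0] + x1 • k • M *ᵥ ![0, 1, 0]) = ptInfVec tP ∧
      b • (x0 ^ q • k • M *ᵥ ![1, 0, 0] + x1 ^ q • k • M *ᵥ ![0, 1, 0]) = ptInfVec tQ := by
  have hp2 : p.rep 2 = 0 := rep_two_eq_zero_of_pmap_mem_linf hM hMlinf (hP ▸ ptInf_mem_linf tP)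
  rw [← Projectivization.mk_rep p, pmap_mk] at hP
  rw [frobPt, pmap_mk] at hQ
  obtain ⟨a, ha, hPa⟩ := exists_smul_eq_ptInfVec hP
  obtain ⟨b, hb, hQb⟩ := exists_smul_eq_ptInfVec hQ
  have hcomb : ∀ (x : Fin 3 → K), x 2 = 0 →
      x 0 • k • M *ᵥ ![1, 0, 0] + x 1 • k • M *ᵥ ![0, 1, 0] = k • M *ᵥ x := fun x hx2 => by
    rw [mulVec_eq_of_apply_two_eq_zero hx2, smul_add, smul_comm k, smul_comm k]
  refine ⟨p.rep 0, p.rep 1, a / k, b / k, div_ne_zero ha hk, div_ne_zero hb hk, ?_, ?_⟩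
  · rw [hcomb _ hp2, smul_smul, div_mul_cancel₀ _ hk, hPa]
  · rw [hcomb (fun i => p.rep i ^ q) (by simp [hp2, hq]), smul_smul, div_mul_cancel₀ _ hk, hQb]

end Conjugate

lemma lineTh_gpt_gqpt_inter_extSub_nonempty {F K : Type} [Field F] [Field K] [Algebra F K]
    [Fintype F] [Fintype K] (hK : Fintype.card K = Fintype.card F ^ 2) {τ : K}
    (hτF : τ ∉ Set.range (algebraMap F K)) {c0 c1 : K → F}
    (hc : ∀ x : K, x = algebraMap F K (c0 x) + algebraMap F K (c1 x) * τ)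
    {W : Submodule F (Fin 5 → F)} {z : K} (hz : z ≠ 0) {u0 u1 : Fin 3 → K}
    (hd0 : dirVec c0 c1 (u0 0 / z) (u0 1 / z) ∈ W) (hd1 : dirVec c0 c1 (u1 0 / z) (u1 1 / z) ∈ W)
    {tP tQ : Option K} {x0 x1 a b : K} (ha : a ≠ 0) (hb : b ≠ 0)
    (hP : a • (x0 • u0 + x1 • u1) = ptInfVec tP)
    (hQ : b • (x0 ^ Fintype.card F • u0 + x1 ^ Fintype.card F • u1) = ptInfVec tQ) :
    (lineTh (gpt τ (Fintype.card F) tP) (gqpt τ (Fintype.card F) tQ)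
      ∩ ptsOf (extSub F W)).Nonempty := by
  set σ : K →ₐ[F] K := FiniteField.frobeniusAlgHom F K
  have hσ : ∀ x, σ x = x ^ Fintype.card F := fun _ => rfl
  have hσσ : ∀ x, σ (σ x) = x := pow_card_pow_card hK
  set ζ : Fin 5 → K := x0 • algVec F (dirVec c0 c1 (u0 0 / z) (u0 1 / z))
    + x1 • algVec F (dirVec c0 c1 (u1 0 / z) (u1 1 / z))
  have hζ : ζ ∈ extSub F W := Submodule.add_mem _
    (Submodule.smul_mem _ _ (Submodule.subset_span ⟨_, hd0, rfl⟩))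
    (Submodule.smul_mem _ _ (Submodule.subset_span ⟨_, hd1, rfl⟩))
  refine lineTh_gpt_gqpt_inter_nonempty (pow_card_ne_self hτF) Fintype.card_ne_zero hζ
    (by simp [ζ, dirVec, algVec]) (inv_ne_zero (mul_ne_zero ha hz)) (b := (σ (b * z))⁻¹) ?_ ?_
  · have h := tauCoords_algVec_dirVec hc (AlgHom.id F K)
    simp only [AlgHom.id_apply] at h
    rw [map_add, map_smul, map_smul, h, h, ← hP]
    funext i
    fin_cases i <;> simp <;> field_simp
  · have hσb : σ b ≠ 0 := (map_ne_zero σ).mpr hb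
    simp only [← hσ] at hQ ⊢
    rw [map_add, map_smul, map_smul, tauCoords_algVec_dirVec hc σ,
      tauCoords_algVec_dirVec hc σ, ← hQ]
    funext i
    fin_cases i <;> simp [hσσ] <;> field_simp

theorem statement_7_general
    {F K : Type} [Field F] [Field K] [Fintype F] [Fintype K] [Algebra F K]
    (q : ℕ) (hq : Fintype.card F = q) (hK : Fintype.card K = q ^ 2)
    (τ : K)
    (hτF : τ ∉ Set.range (algebraMap F K))
    (c0 c1 : K → F)
    (hc : ∀ x : K, x = algebraMap F K (c0 x) + algebraMap F K (c1 x) * τ)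
    (B : Set (PP K 3)) (hB : IsBaerSubplane F B)
    (Wsub : Submodule F (Fin 5 → F))
    (hWns : ¬ ptsOf Wsub ⊆ sinf F)
    (halpha : bb c0 c1 '' (B \ linf K) = ptsOf Wsub \ sinf F)
    (tP tQ : Option K)
    (hconj : ConjWrtSubline F q (B ∩ linf K) (ptInf tP) (ptInf tQ)) :
    (lineTh (gpt τ q tP) (gqpt τ q tQ) ∩ ptsOf (extSub F Wsub)).Nonempty ∧
    (lineTh (gqpt τ q tP) (gpt τ q tQ) ∩ ptsOf (extSub F Wsub)).Nonempty := by
  subst hq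
  obtain ⟨Mb, -, rfl⟩ := hB
  obtain ⟨M, hM, hMlinf, hb, p, hP, hQ⟩ := hconj
  obtain ⟨k, hk, hk0, hk1⟩ := exists_smul_mulVec_mem_baerSubmodule hM hb
  have haff : (mimg Mb (subplaneVecs F K) \ linf K).Nonempty := by
    obtain ⟨x, hxW, hx⟩ := Set.not_subset.mp hWns
    rw [← Set.image_nonempty (f := bb c0 c1), halpha]
    exact ⟨x, hxW, hx⟩
  obtain ⟨v, hv, hv2⟩ := exists_mem_baerSubmodule_apply_two_ne_zero haff
  have hdir : ∀ {u}, u ∈ baerSubmodule F Mb → u 2 = 0 →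
      dirVec c0 c1 (u 0 / v 2) (u 1 / v 2) ∈ Wsub :=
    fun hu hu2 => dirVec_mem_of_mem_baerSubmodule hτF hc halpha hu hu2 hv hv2
  obtain ⟨x0, x1, a, b, ha, hb, hPx, hQx⟩ :=
    exists_coords_of_conj Fintype.card_ne_zero hM hMlinf hk hP hQ
  have hcol : ∀ u : Fin 3 → K, u ≠ 0 → u 2 = 0 → (k • M *ᵥ u) 2 = 0 := fun u hu hu2 => by
    rw [Pi.smul_apply, mulVec_apply_two_eq_zero hM hMlinf hu hu2, smul_zero]
  have hd0 := hdir hk0 (hcol _ (by simp [funext_iff, Fin.forall_fin_succ]) rfl)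
  have hd1 := hdir hk1 (hcol _ (by simp [funext_iff, Fin.forall_fin_succ]) rfl)
  refine ⟨lineTh_gpt_gqpt_inter_extSub_nonempty hK hτF hc hv2 hd0 hd1 ha hb hPx hQx, ?_⟩
  rw [lineTh_comm]
  refine lineTh_gpt_gqpt_inter_extSub_nonempty hK hτF hc hv2 hd0 hd1 hb ha hQx ?_
  simpa only [pow_card_pow_card hK] using hPx

/-- If `B` is a Baer subplane secant to `ℓ∞`, represented in `PG(4,q)` by the plane `α`,
and `P̄, Q̄ ∈ ℓ∞` are conjugate with respect to `B`, then the lines `PQ^q` and `P^qQ`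
of `PG(4,q²)` meet the extended plane `α⋆`. -/
theorem statement_7
    {F K : Type} [Field F] [Field K] [Fintype F] [Fintype K] [Algebra F K]
    (q : ℕ) (hq : Fintype.card F = q) (hK : Fintype.card K = q ^ 2)
    (τ : K) (t0 t1 : F)
    (hτ : τ ^ 2 = algebraMap F K t1 * τ + algebraMap F K t0)
    (hτF : τ ∉ Set.range (algebraMap F K))
    (c0 c1 : K → F)
    (hc : ∀ x : K, x = algebraMap F K (c0 x) + algebraMap F K (c1 x) * τ)
    (B : Set (PP K 3)) (hB : IsBaerSubplane F B)
    (hsec : (B ∩ linf K).ncard = q + 1)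
    (Wsub : Submodule F (Fin 5 → F)) (hW3 : Module.finrank F Wsub = 3)
    (hWns : ¬ ptsOf Wsub ⊆ sinf F)
    (halpha : bb c0 c1 '' (B \ linf K) = ptsOf Wsub \ sinf F)
    (tP tQ : Option K)
    (hconj : ConjWrtSubline F q (B ∩ linf K) (ptInf tP) (ptInf tQ)) :
    (lineTh (gpt τ q tP) (gqpt τ q tQ) ∩ ptsOf (extSub F Wsub)).Nonempty ∧
    (lineTh (gqpt τ q tP) (gpt τ q tQ) ∩ ptsOf (extSub F Wsub)).Nonempty :=
  statement_7_general q hq hK τ hτF c0 c1 hc B hB Wsub hWns halpha tP tQ hconj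

end BaerConics
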